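/- arXiv:math/0612216 — 2 statements merged into one kernel-verified Lean document; each statement's English description precedes it below -/
import Mathlib

section
/- Let 0 < q < 1 and let z be a nonzero complex number. Then |A_q(z)| ≤ (−q^{1/2}; q)_∞ · exp( −(log|z|)² / (2 log q) ), where (−q^{1/2};q)_∞ = ∏_{k=0}^∞ (1 + q^{k+1/2}). (Note log q < 0, so the exponent is nonnegative.) -/
/-!
Completing the square in `k` gives
`q^{k²} |z|^k ≤ q^{k(k-1)/2} (√q)^k · exp(-(log |z|)² / (2 log q))`, so `|A_q(z)|` is bounded
by that exponential times the Euler series `F(t) = ∑ q^{k(k-1)/2} t^k / (q;q)_k` at `t = √q`.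
Euler's identity `F(t) = ∏ (1 + t q^k)` follows from the functional equation
`F(t) = (1 + t) F(qt)`, iterated `n` times, together with `F(t q^n) → 1`.
-/

open Filter Topology Finset

/-- `(q;q)_k` in the usual notation. -/
def qPochhammer {R : Type*} [CommRing R] (q : R) (k : ℕ) : R :=
  ∏ j ∈ range k, (1 - q ^ (j + 1))

noncomputable def eulerCoeff (q : ℝ) (k : ℕ) : ℝ := q ^ k.choose 2 / qPochhammer q k

noncomputable def eulerSeries (q t : ℝ) : ℝ := ∑' k, eulerCoeff q k * t ^ k

section Euler

variable {q : ℝ}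

lemma qPochhammer_pos (hq0 : 0 ≤ q) (hq1 : q < 1) (k : ℕ) : 0 < qPochhammer q k :=
  prod_pos fun j _ => sub_pos.2 (pow_lt_one₀ hq0 hq1 j.succ_ne_zero)

lemma eulerCoeff_zero : eulerCoeff q 0 = 1 := by simp [eulerCoeff, qPochhammer]

lemma eulerCoeff_nonneg (hq0 : 0 ≤ q) (hq1 : q < 1) (k : ℕ) : 0 ≤ eulerCoeff q k :=
  div_nonneg (pow_nonneg hq0 _) (qPochhammer_pos hq0 hq1 k).le

lemma eulerCoeff_succ_mul (hq0 : 0 ≤ q) (hq1 : q < 1) (k : ℕ) :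
    eulerCoeff q (k + 1) * (1 - q ^ (k + 1)) = eulerCoeff q k * q ^ k := by
  have hq : 1 - q ^ (k + 1) ≠ 0 := (sub_pos.2 (pow_lt_one₀ hq0 hq1 k.succ_ne_zero)).ne'
  have hP := (qPochhammer_pos hq0 hq1 k).ne'
  rw [eulerCoeff, eulerCoeff, qPochhammer, prod_range_succ, ← qPochhammer,
    Nat.choose_succ_succ, Nat.choose_one_right, Nat.add_comm, pow_add]
  field_simp

lemma eulerCoeff_succ_le (hq0 : 0 ≤ q) (hq1 : q < 1) (k : ℕ) :
    eulerCoeff q (k + 1) ≤ eulerCoeff q k * q ^ k / (1 - q) := by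
  have hpow : q ^ (k + 1) ≤ q := pow_le_of_le_one hq0 hq1.le (by omega)
  rw [← eulerCoeff_succ_mul hq0 hq1, mul_div_assoc]
  refine le_mul_of_one_le_right (eulerCoeff_nonneg hq0 hq1 _) ?_
  rw [one_le_div (sub_pos.2 hq1)]
  linarith

lemma summable_eulerCoeff_mul_pow (hq0 : 0 ≤ q) (hq1 : q < 1) (t : ℝ) :
    Summable fun k => eulerCoeff q k * t ^ k := by
  refine summable_of_ratio_norm_eventually_le one_half_lt_one ?_
  have hlim : Tendsto (fun k => q ^ k * (|t| / (1 - q))) atTop (𝓝 0) := by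
    simpa using (tendsto_pow_atTop_nhds_zero_of_lt_one hq0 hq1).mul_const (|t| / (1 - q))
  filter_upwards [hlim.eventually_le_const one_half_pos] with k hk
  have ha := eulerCoeff_nonneg hq0 hq1
  simp only [norm_mul, norm_pow, Real.norm_eq_abs, abs_of_nonneg (ha _)]
  have hq : 0 < 1 - q := sub_pos.2 hq1
  calc eulerCoeff q (k + 1) * |t| ^ (k + 1)
      ≤ eulerCoeff q k * q ^ k / (1 - q) * |t| ^ (k + 1) := by
        gcongr; exact eulerCoeff_succ_le hq0 hq1 k
    _ = q ^ k * (|t| / (1 - q)) * (eulerCoeff q k * |t| ^ k) := by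
        field_simp; ring
    _ ≤ 1 / 2 * (eulerCoeff q k * |t| ^ k) := by
        gcongr; exact mul_nonneg (ha k) (pow_nonneg (abs_nonneg t) k)

lemma eulerSeries_mul_eq (hq0 : 0 ≤ q) (hq1 : q < 1) (t : ℝ) :
    eulerSeries q t = (1 + t) * eulerSeries q (q * t) := by
  have hs := summable_eulerCoeff_mul_pow hq0 hq1
  have hsub : Summable fun k => eulerCoeff q k * (1 - q ^ k) * t ^ k :=
    ((hs t).sub (hs (q * t))).congr fun k => by ring
  have hdiff : eulerSeries q t - eulerSeries q (q * t) = t * eulerSeries q (q * t) :=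
    calc eulerSeries q t - eulerSeries q (q * t)
        = ∑' k, eulerCoeff q k * (1 - q ^ k) * t ^ k := by
          rw [eulerSeries, eulerSeries, ← (hs t).tsum_sub (hs (q * t))]
          exact tsum_congr fun k => by ring
      _ = ∑' k, eulerCoeff q (k + 1) * (1 - q ^ (k + 1)) * t ^ (k + 1) := by
          rw [hsub.tsum_eq_zero_add]; simp
      _ = ∑' k, t * (eulerCoeff q k * (q * t) ^ k) := by
          refine tsum_congr fun k => ?_
          rw [eulerCoeff_succ_mul hq0 hq1]; ring
      _ = t * eulerSeries q (q * t) := tsum_mul_left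
  linarith

lemma eulerSeries_eq_prod_mul (hq0 : 0 ≤ q) (hq1 : q < 1) (t : ℝ) (n : ℕ) :
    eulerSeries q t = (∏ j ∈ range n, (1 + t * q ^ j)) * eulerSeries q (t * q ^ n) := by
  induction n with
  | zero => simp
  | succ n ih =>
    rw [ih, eulerSeries_mul_eq hq0 hq1 (t * q ^ n), prod_range_succ]
    ring_nf

lemma eulerSeries_sub_one (hq0 : 0 ≤ q) (hq1 : q < 1) (t : ℝ) :
    eulerSeries q t - 1 = ∑' k, eulerCoeff q (k + 1) * t ^ (k + 1) := by
  rw [eulerSeries, (summable_eulerCoeff_mul_pow hq0 hq1 t).tsum_eq_zero_add, eulerCoeff_zero]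
  ring

lemma one_le_eulerSeries (hq0 : 0 ≤ q) (hq1 : q < 1) {t : ℝ} (ht : 0 ≤ t) :
    1 ≤ eulerSeries q t := by
  rw [← sub_nonneg, eulerSeries_sub_one hq0 hq1]
  exact tsum_nonneg fun k => mul_nonneg (eulerCoeff_nonneg hq0 hq1 _) (pow_nonneg ht _)

lemma eulerSeries_mul_sub_one_le (hq0 : 0 ≤ q) (hq1 : q < 1) {c t : ℝ} (hc0 : 0 ≤ c)
    (hc1 : c ≤ 1) (ht : 0 ≤ t) :
    eulerSeries q (c * t) - 1 ≤ c * (eulerSeries q t - 1) := by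
  have hs (x : ℝ) := (summable_nat_add_iff 1).2 (summable_eulerCoeff_mul_pow hq0 hq1 x)
  rw [eulerSeries_sub_one hq0 hq1, eulerSeries_sub_one hq0 hq1, ← tsum_mul_left]
  refine (hs (c * t)).tsum_le_tsum (fun k => ?_) ((hs t).mul_left c)
  rw [mul_pow, mul_left_comm]
  exact mul_le_mul_of_nonneg_right (pow_le_of_le_one hc0 hc1 k.succ_ne_zero)
    (mul_nonneg (eulerCoeff_nonneg hq0 hq1 _) (pow_nonneg ht _))

lemma tendsto_eulerSeries_mul_pow (hq0 : 0 ≤ q) (hq1 : q < 1) {t : ℝ} (ht : 0 ≤ t) :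
    Tendsto (fun n => eulerSeries q (t * q ^ n)) atTop (𝓝 1) := by
  have hpow := tendsto_pow_atTop_nhds_zero_of_lt_one hq0 hq1
  have hupper : Tendsto (fun n => 1 + q ^ n * (eulerSeries q t - 1)) atTop (𝓝 1) := by
    simpa using (hpow.mul_const (eulerSeries q t - 1)).const_add 1
  refine tendsto_of_tendsto_of_tendsto_of_le_of_le tendsto_const_nhds hupper
    (fun n => one_le_eulerSeries hq0 hq1 (mul_nonneg ht (pow_nonneg hq0 n))) fun n => ?_
  have := eulerSeries_mul_sub_one_le hq0 hq1 (pow_nonneg hq0 n) (pow_le_one₀ hq0 hq1.le) ht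
  rw [mul_comm] at this
  linarith

theorem eulerSeries_eq_tprod (hq0 : 0 ≤ q) (hq1 : q < 1) {t : ℝ} (ht : 0 ≤ t) :
    eulerSeries q t = ∏' k, (1 + t * q ^ k) := by
  have hmul : Multipliable fun k => 1 + t * q ^ k :=
    Real.multipliable_one_add_of_summable ((summable_geometric_of_lt_one hq0 hq1).mul_left t)
  have hlim := hmul.hasProd.tendsto_prod_nat.mul (tendsto_eulerSeries_mul_pow hq0 hq1 ht)
  simp_rw [← eulerSeries_eq_prod_mul hq0 hq1 t, mul_one] at hlim
  exact tendsto_nhds_unique tendsto_const_nhds hlim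

end Euler

lemma pow_sq_mul_pow_le_exp {s r : ℝ} (hs0 : 0 < s) (hs1 : s < 1) (hr : 0 < r) (k : ℕ) :
    s ^ (k ^ 2) * r ^ k ≤ Real.exp (-Real.log r ^ 2 / (4 * Real.log s)) := by
  have hl : Real.log s < 0 := Real.log_neg hs0 hs1
  have hexp : s ^ (k ^ 2) * r ^ k
      = Real.exp (((k ^ 2 : ℕ) : ℝ) * Real.log s + k * Real.log r) := by
    rw [Real.exp_add, Real.exp_nat_mul, Real.exp_nat_mul, Real.exp_log hs0, Real.exp_log hr]
  rw [hexp, Real.exp_le_exp, le_div_iff_of_neg (by linarith)]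
  push_cast
  nlinarith [sq_nonneg (2 * k * Real.log s + Real.log r)]

lemma sq_pow_sq_eq {M : Type*} [Monoid M] (s : M) (k : ℕ) :
    (s ^ 2) ^ (k ^ 2) = (s ^ 2) ^ k.choose 2 * (s ^ k * s ^ (k ^ 2)) := by
  have hchoose : 2 * k.choose 2 + k = k ^ 2 := by
    rw [Nat.choose_two_right, Nat.mul_div_cancel' (Nat.even_mul_pred_self k).two_dvd]
    cases k with
    | zero => rfl
    | succ k => rw [Nat.add_sub_cancel]; ring
  simp only [← pow_mul, ← pow_add]
  congr 1
  omega

lemma norm_qPochhammer_ofReal {q : ℝ} (hq0 : 0 ≤ q) (hq1 : q < 1) (k : ℕ) :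
    ‖qPochhammer (q : ℂ) k‖ = qPochhammer q k := by
  have hcast : qPochhammer (q : ℂ) k = ((qPochhammer q k : ℝ) : ℂ) := by
    simp [qPochhammer]
  rw [hcast, Complex.norm_real, Real.norm_of_nonneg (qPochhammer_pos hq0 hq1 k).le]

/-- For `0 < q < 1` and nonzero `z : ℂ`,
`|A_q(z)| = |∑_{k=0}^∞ q^{k²} (-z)^k/(q;q)_k| ≤ (-q^{1/2};q)_∞ · exp(-(log|z|)²/(2 log q))`,
where `(-q^{1/2};q)_∞ = ∏_{k=0}^∞ (1 + √q · q^k)`. -/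
theorem stmt7 (q : ℝ) (hq0 : 0 < q) (hq1 : q < 1) (z : ℂ) (hz : z ≠ 0) :
    ‖(∑' k : ℕ, (q : ℂ) ^ (k ^ 2) * (-z) ^ k /
        ∏ j ∈ Finset.range k, (1 - (q : ℂ) ^ (j + 1)))‖ ≤
      (∏' k : ℕ, (1 + Real.sqrt q * q ^ k)) *
        Real.exp (-(Real.log ‖z‖) ^ 2 / (2 * Real.log q)) := by
  set M := Real.exp (-(Real.log ‖z‖) ^ 2 / (2 * Real.log q))
  have hsqrt0 : 0 < √q := Real.sqrt_pos.2 hq0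
  have hgauss (k : ℕ) : √q ^ (k ^ 2) * ‖z‖ ^ k ≤ M := by
    have hsqrt1 : √q < 1 := (Real.sqrt_lt' one_pos).2 (by rwa [one_pow])
    have h := pow_sq_mul_pow_le_exp hsqrt0 hsqrt1 (norm_pos_iff.2 hz) k
    rwa [Real.log_sqrt hq0.le, show 4 * (Real.log q / 2) = 2 * Real.log q by ring] at h
  have hterm (k : ℕ) : ‖(q : ℂ) ^ (k ^ 2) * (-z) ^ k / qPochhammer (q : ℂ) k‖
      ≤ eulerCoeff q k * √q ^ k * M := by
    have hnorm : ‖(q : ℂ) ^ (k ^ 2) * (-z) ^ k / qPochhammer (q : ℂ) k‖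
        = eulerCoeff q k * √q ^ k * (√q ^ (k ^ 2) * ‖z‖ ^ k) := by
      rw [norm_div, norm_mul, norm_pow, norm_pow, norm_neg, Complex.norm_real,
        Real.norm_of_nonneg hq0.le, norm_qPochhammer_ofReal hq0.le hq1,
        ← Real.sq_sqrt hq0.le, sq_pow_sq_eq, Real.sq_sqrt hq0.le, eulerCoeff]
      ring
    rw [hnorm]
    exact mul_le_mul_of_nonneg_left (hgauss k)
      (mul_nonneg (eulerCoeff_nonneg hq0.le hq1 k) (pow_nonneg hsqrt0.le k))
  have hsum : HasSum (fun k => eulerCoeff q k * √q ^ k * M) (eulerSeries q √q * M) :=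
    (summable_eulerCoeff_mul_pow hq0.le hq1 √q).hasSum.mul_right M
  rw [← eulerSeries_eq_tprod hq0.le hq1 hsqrt0.le]
  exact tsum_of_norm_bounded hsum hterm
end

section
/- For every fixed complex number z, the limit of A_q((1−q)z) = ∑_{k=0}^∞ q^{k²} (−(1−q)z)^k / (q;q)_k as q tends to 1 from the left (q ∈ (0,1), q → 1⁻) equals e^{−z}. -/
/-!
Writing `[n]_q = 1 + q + ⋯ + q^(n-1)` (`qNat`), one has `1 - q^n = (1 - q) [n]_q`, so the `k`-th
term of `A_q((1-q)z)` is `q^(k²) (-z)^k / [k]_q!`. As `q → 1` it tends to `(-z)^k / k!`, and for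
`0 < q ≤ 1` the estimate `q^k (j+1) ≤ [j+1]_q` for `j < k` gives `q^(k²) k! ≤ [k]_q!`, so the
terms are dominated by `‖z‖^k / k!`. Tannery's theorem then yields the limit
`∑ (-z)^k / k! = e^(-z)`.
-/

open Filter Finset Topology
open scoped Nat

section QAnalog

variable {R : Type*}

def qNat [Semiring R] (q : R) (n : ℕ) : R := ∑ i ∈ range n, q ^ i

def qFactorial [CommSemiring R] (q : R) (k : ℕ) : R := ∏ j ∈ range k, qNat q (j + 1)

theorem prod_one_sub_pow_eq_mul_qFactorial [CommRing R] (q : R) (k : ℕ) :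
    ∏ j ∈ range k, (1 - q ^ (j + 1)) = (1 - q) ^ k * qFactorial q k := by
  simp only [qFactorial, qNat, ← mul_neg_geom_sum, prod_mul_distrib, prod_const, card_range]

theorem qFactorial_one [CommSemiring R] (k : ℕ) : qFactorial (1 : R) k = k ! := by
  simp [qFactorial, qNat, ← prod_range_add_one_eq_factorial]

theorem map_qFactorial {S : Type*} [CommSemiring R] [CommSemiring S] (f : R →+* S) (q : R)
    (k : ℕ) : f (qFactorial q k) = qFactorial (f q) k := by
  simp [qFactorial, qNat, map_prod, map_sum, map_pow]

theorem continuous_qFactorial [CommSemiring R] [TopologicalSpace R] [IsTopologicalSemiring R]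
    (k : ℕ) : Continuous fun q : R => qFactorial q k := by
  unfold qFactorial qNat
  fun_prop

theorem natCast_mul_pow_le_qNat [Semiring R] [PartialOrder R] [IsOrderedRing R] {q : R}
    (h0 : 0 ≤ q) (h1 : q ≤ 1) {n m : ℕ} (hnm : n ≤ m) : n * q ^ m ≤ qNat q n := by
  calc n * q ^ m = ∑ _i ∈ range n, q ^ m := by simp
    _ ≤ qNat q n := sum_le_sum fun i hi =>
        pow_le_pow_of_le_one h0 h1 ((mem_range.mp hi).le.trans hnm)

theorem factorial_mul_pow_sq_le_qFactorial [CommSemiring R] [PartialOrder R] [IsOrderedRing R]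
    {q : R} (h0 : 0 ≤ q) (h1 : q ≤ 1) (k : ℕ) : k ! * q ^ (k ^ 2) ≤ qFactorial q k := by
  calc k ! * q ^ (k ^ 2) = ∏ j ∈ range k, ((j + 1 : ℕ) : R) * q ^ k := by
        rw [prod_mul_distrib, prod_const, card_range, ← pow_mul, ← sq, ← Nat.cast_prod,
          prod_range_add_one_eq_factorial]
    _ ≤ qFactorial q k := prod_le_prod (fun _ _ => by positivity)
        fun j hj => natCast_mul_pow_le_qNat h0 h1 (mem_range.mp hj)

end QAnalog

theorem ramanujan_term_eq_div_qFactorial {K : Type*} [Field K] {q : K} (hq : q ≠ 1) (z : K)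
    (k : ℕ) :
    q ^ (k ^ 2) * (-((1 - q) * z)) ^ k / ∏ j ∈ range k, (1 - q ^ (j + 1))
      = q ^ (k ^ 2) * (-z) ^ k / qFactorial q k := by
  rw [prod_one_sub_pow_eq_mul_qFactorial, neg_mul_eq_mul_neg, mul_pow, mul_left_comm,
    mul_div_mul_left _ _ (pow_ne_zero k (sub_ne_zero.mpr hq.symm))]

theorem tendsto_pow_sq_mul_div_qFactorial (w : ℂ) (k : ℕ) :
    Tendsto (fun q : ℝ => (q : ℂ) ^ (k ^ 2) * w ^ k / qFactorial (q : ℂ) k) (𝓝 1)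
      (𝓝 (w ^ k / k !)) := by
  have hden : Tendsto (fun q : ℝ => qFactorial (q : ℂ) k) (𝓝 1) (𝓝 (k ! : ℂ)) :=
    ((continuous_qFactorial k).comp Complex.continuous_ofReal).tendsto' 1 _
      (by simp [qFactorial_one])
  have hnum : Tendsto (fun q : ℝ => (q : ℂ) ^ (k ^ 2) * w ^ k) (𝓝 1) (𝓝 (w ^ k)) :=
    (by fun_prop : Continuous fun q : ℝ => (q : ℂ) ^ (k ^ 2) * w ^ k).tendsto' 1 _ (by simp)
  exact hnum.div hden (Nat.cast_ne_zero.mpr k.factorial_ne_zero)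

theorem norm_pow_sq_mul_div_qFactorial_le {q : ℝ} (h0 : 0 < q) (h1 : q ≤ 1) (w : ℂ)
    (k : ℕ) :
    ‖(q : ℂ) ^ (k ^ 2) * w ^ k / qFactorial (q : ℂ) k‖ ≤ ‖w‖ ^ k / k ! := by
  have hle := factorial_mul_pow_sq_le_qFactorial h0.le h1 k
  have hpos : 0 < qFactorial q k := lt_of_lt_of_le (by positivity) hle
  have hcast : qFactorial (q : ℂ) k = ((qFactorial q k : ℝ) : ℂ) :=
    (map_qFactorial Complex.ofRealHom q k).symm
  rw [hcast, norm_div, norm_mul, norm_pow, norm_pow, Complex.norm_real, Complex.norm_real,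
    Real.norm_of_nonneg h0.le, Real.norm_of_nonneg hpos.le, div_le_div_iff₀ hpos (by positivity)]
  nlinarith [pow_nonneg (norm_nonneg w) k]

/-- For every fixed `z : ℂ`, the limit of
`A_q((1-q)z) = ∑_{k=0}^∞ q^{k²} (-(1-q)z)^k / (q;q)_k` as `q → 1⁻` with `q ∈ (0,1)`
equals `e^{-z}`. -/
theorem stmt8 (z : ℂ) :
    Filter.Tendsto
      (fun q : ℝ => ∑' k : ℕ, (q : ℂ) ^ (k ^ 2) * (-(((1 : ℂ) - (q : ℂ)) * z)) ^ k /
          ∏ j ∈ Finset.range k, (1 - (q : ℂ) ^ (j + 1)))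
      (nhdsWithin 1 (Set.Ioo 0 1)) (nhds (Complex.exp (-z))) := by
  rw [Complex.exp_eq_exp_ℂ, NormedSpace.exp_eq_tsum_div]
  refine tendsto_tsum_of_dominated_convergence (Real.summable_pow_div_factorial ‖z‖)
    (fun k => ?_) ?_
  · refine ((tendsto_pow_sq_mul_div_qFactorial (-z) k).mono_left nhdsWithin_le_nhds).congr' ?_
    filter_upwards [self_mem_nhdsWithin] with q hq
    rw [ramanujan_term_eq_div_qFactorial (by exact_mod_cast hq.2.ne)]
  · filter_upwards [self_mem_nhdsWithin] with q hq k
    rw [ramanujan_term_eq_div_qFactorial (by exact_mod_cast hq.2.ne), ← norm_neg z]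
    exact norm_pow_sq_mul_div_qFactorial_le hq.1 hq.2.le (-z) k
end
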